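/- arXiv:2104.01841 — 6 statements merged into one kernel-verified Lean document; each statement's English description precedes it below -/
import Mathlib

section
/- Let H, G₁, G₂ be finite simple graphs and let h₁ : H → G₁ and h₂ : H → G₂ be injective graph homomorphisms. Then in the category of finite simple graphs and (all) graph homomorphisms, the span G₁ ←h₁— H —h₂→ G₂ has a pushout; it is given by the H-sum G₁ #_H G₂ (the graph obtained from the disjoint union of G₁ and G₂ by identifying h₁(v) with h₂(v) for every vertex v of H) together with the evident inclusion homomorphisms G₁ → G₁ #_H G₂ and G₂ → G₁ #_H G₂. -/
open CategoryTheory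

/-- A finite simple graph: a finite vertex type together with a simple graph on it. -/
structure FinGraph : Type 1 where
  V : Type
  [fin : Finite V]
  G : SimpleGraph V

attribute [instance] FinGraph.fin

namespace Glue

variable {S A B : FinGraph} (g : S.G →g A.G) (h : S.G →g B.G)

/-- The identification relation of the `S`-sum: `inl (g s)` is glued to `inr (h s)`. -/
def rel : (A.V ⊕ B.V) → (A.V ⊕ B.V) → Prop :=
  fun x y => ∃ s : S.V, x = Sum.inl (g s) ∧ y = Sum.inr (h s)

/-- Vertices of the `S`-sum: the disjoint union with `g s` and `h s` identified. -/
def GV := Quot (rel g h)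

instance : Finite (GV g h) :=
  Finite.of_surjective (Quot.mk (rel g h)) fun q => Quot.inductionOn q fun x => ⟨x, rfl⟩

/-- Left injection on vertices. -/
def mkl (a : A.V) : GV g h := Quot.mk _ (Sum.inl a)

/-- Right injection on vertices. -/
def mkr (b : B.V) : GV g h := Quot.mk _ (Sum.inr b)

/-- Adjacency in the `S`-sum: edges coming from `A` or from `B` (with loops and
parallel edges removed by the quotient and the `x ≠ y` condition). -/
def adj (x y : GV g h) : Prop :=
  x ≠ y ∧ ((∃ a b, A.G.Adj a b ∧ x = mkl g h a ∧ y = mkl g h b) ∨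
           (∃ a b, B.G.Adj a b ∧ x = mkr g h a ∧ y = mkr g h b))

/-- The `S`-sum graph `A #_S B`. -/
def graph : SimpleGraph (GV g h) where
  Adj := adj g h
  symm := by
    constructor
    rintro x y ⟨hne, hc⟩
    refine ⟨hne.symm, ?_⟩
    rcases hc with ⟨a, b, hab, hx, hy⟩ | ⟨a, b, hab, hx, hy⟩
    · exact Or.inl ⟨b, a, hab.symm, hy, hx⟩
    · exact Or.inr ⟨b, a, hab.symm, hy, hx⟩
  loopless := ⟨fun x hx => hx.1 rfl⟩

/-- The `S`-sum as a finite graph. -/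
def obj : FinGraph := ⟨GV g h, graph g h⟩

open Classical in
/-- Normal form for vertices of the disjoint union modulo gluing. -/
noncomputable def norm : A.V ⊕ B.V → A.V ⊕ B.V
  | .inl a => .inl a
  | .inr b => if hb : ∃ s, h s = b then .inl (g (Classical.choose hb)) else .inr b

lemma norm_rel (hh : Function.Injective h) {x y : A.V ⊕ B.V} (hxy : rel g h x y) :
    norm g h x = norm g h y := by
  obtain ⟨s, rfl, rfl⟩ := hxy
  have hb : ∃ t : S.V, h t = h s := ⟨s, rfl⟩
  have hc : Classical.choose hb = s := hh (Classical.choose_spec hb)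
  simp only [norm, dif_pos hb, hc]

lemma norm_eqvGen (hh : Function.Injective h) {x y : A.V ⊕ B.V}
    (hxy : Relation.EqvGen (rel g h) x y) : norm g h x = norm g h y := by
  induction hxy with
  | rel _ _ hr => exact norm_rel g h hh hr
  | refl => rfl
  | symm _ _ _ ih => exact ih.symm
  | trans _ _ _ _ _ ih₁ ih₂ => exact ih₁.trans ih₂

lemma mkl_inj (hh : Function.Injective h) : Function.Injective (mkl g h) := by
  intro a a' e
  have := norm_eqvGen g h hh (Quot.eq.1 e)
  simpa [norm] using this

lemma mkr_inj (hg : Function.Injective g) (hh : Function.Injective h) :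
    Function.Injective (mkr g h) := by
  intro b b' e
  have hn := norm_eqvGen g h hh (Quot.eq.1 e)
  by_cases hb : ∃ s, h s = b <;> by_cases hb' : ∃ s, h s = b'
  · simp only [norm, dif_pos hb, dif_pos hb'] at hn
    have : Classical.choose hb = Classical.choose hb' := hg (Sum.inl.inj hn)
    rw [← Classical.choose_spec hb, ← Classical.choose_spec hb', this]
  · simp only [norm, dif_pos hb, dif_neg hb'] at hn
    exact absurd hn (by simp)
  · simp only [norm, dif_neg hb, dif_pos hb'] at hn
    exact absurd hn (by simp)
  · simp only [norm, dif_neg hb, dif_neg hb'] at hn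
    exact Sum.inr.inj hn

/-- The inclusion homomorphism `A → A #_S B`. -/
def inlHom (hg : Function.Injective g) (hh : Function.Injective h) :
    A.G →g (obj g h).G where
  toFun := mkl g h
  map_rel' := fun {a b} hab =>
    show adj g h (mkl g h a) (mkl g h b) from
    ⟨fun e => hab.ne (mkl_inj g h hh e), Or.inl ⟨a, b, hab, rfl, rfl⟩⟩

/-- The inclusion homomorphism `B → A #_S B`. -/
def inrHom (hg : Function.Injective g) (hh : Function.Injective h) :
    B.G →g (obj g h).G where
  toFun := mkr g h
  map_rel' := fun {a b} hab =>
    show adj g h (mkr g h a) (mkr g h b) from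
    ⟨fun e => hab.ne (mkr_inj g h hg hh e), Or.inr ⟨a, b, hab, rfl, rfl⟩⟩

lemma inlHom_inj (hg : Function.Injective g) (hh : Function.Injective h) :
    Function.Injective (inlHom g h hg hh) := mkl_inj g h hh

lemma inrHom_inj (hg : Function.Injective g) (hh : Function.Injective h) :
    Function.Injective (inrHom g h hg hh) := mkr_inj g h hg hh

end Glue

/-- The complete graph `K n` on vertex set `Fin n`. -/
abbrev KG (n : ℕ) : FinGraph := ⟨Fin n, (⊤ : SimpleGraph (Fin n))⟩

/-- `Graph_homo`: the category of finite simple graphs and (all) graph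
homomorphisms. -/
instance : Category.{0, 1} FinGraph where
  Hom A B := A.G →g B.G
  id A := SimpleGraph.Hom.id
  comp f g := g.comp f

/-- The underlying vertex map of a morphism of `Graph_homo`. -/
abbrev homFun {A B : FinGraph} (f : A ⟶ B) : A.V → B.V := (f : A.G →g B.G).toFun

/-! Every vertex of the `S`-sum comes from `A` or from `B` and every edge from an edge of `A` or
of `B`. Hence a cocone `(f₁, f₂)` agreeing on `S` descends through the gluing relation to a
unique vertex map, which is a homomorphism because it is one on each side. -/

namespace Glue

variable {S A B : FinGraph} (g : S.G →g A.G) (h : S.G →g B.G)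

lemma mkl_apply_eq_mkr_apply (s : S.V) : mkl g h (g s) = mkr g h (h s) :=
  Quot.sound ⟨s, rfl, rfl⟩

lemma inlHom_comp_eq_inrHom_comp (hg : Function.Injective g) (hh : Function.Injective h) :
    (inlHom g h hg hh).comp g = (inrHom g h hg hh).comp h :=
  RelHom.ext (mkl_apply_eq_mkr_apply g h)

def desc {W : Type*} {G : SimpleGraph W} (f₁ : A.G →g G) (f₂ : B.G →g G)
    (hf : f₁.comp g = f₂.comp h) : graph g h →g G where
  toFun := Quot.lift (Sum.elim f₁ f₂) fun _ _ ⟨s, hx, hy⟩ => by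
    subst hx hy
    exact DFunLike.congr_fun hf s
  map_rel' := by
    rintro _ _ ⟨-, ⟨a, b, hab, rfl, rfl⟩ | ⟨a, b, hab, rfl, rfl⟩⟩
    · exact f₁.map_rel hab
    · exact f₂.map_rel hab

lemma hom_ext {W : Type*} {G : SimpleGraph W} {m m' : graph g h →g G}
    (hl : ∀ a, m (mkl g h a) = m' (mkl g h a)) (hr : ∀ b, m (mkr g h b) = m' (mkr g h b)) :
    m = m' :=
  RelHom.ext <| Quot.ind <| Sum.rec hl hr

end Glue

/-- for injective graph homomorphisms `h₁ : H → G₁` and `h₂ : H → G₂`,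
the span `G₁ ← H → G₂` has a pushout in the category of finite simple graphs and all
graph homomorphisms, namely the `H`-sum `G₁ #_H G₂` (disjoint union with `h₁ v`
identified with `h₂ v` for each vertex `v` of `H`) with its evident inclusions:
the square commutes and every commuting cocone factors uniquely through it. -/
theorem Hsum_is_pushout (H G₁ G₂ : FinGraph) (h₁ : H ⟶ G₁) (h₂ : H ⟶ G₂)
    (inj₁ : Function.Injective (homFun h₁))
    (inj₂ : Function.Injective (homFun h₂)) :
    h₁ ≫ (Glue.inlHom h₁ h₂ inj₁ inj₂ : G₁ ⟶ Glue.obj h₁ h₂) =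
      h₂ ≫ (Glue.inrHom h₁ h₂ inj₁ inj₂ : G₂ ⟶ Glue.obj h₁ h₂) ∧
    ∀ (Z : FinGraph) (z₁ : G₁ ⟶ Z) (z₂ : G₂ ⟶ Z), h₁ ≫ z₁ = h₂ ≫ z₂ →
      ∃! m : Glue.obj h₁ h₂ ⟶ Z,
        (Glue.inlHom h₁ h₂ inj₁ inj₂ : G₁ ⟶ Glue.obj h₁ h₂) ≫ m = z₁ ∧
        (Glue.inrHom h₁ h₂ inj₁ inj₂ : G₂ ⟶ Glue.obj h₁ h₂) ≫ m = z₂ := by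
  refine ⟨Glue.inlHom_comp_eq_inrHom_comp h₁ h₂ inj₁ inj₂, fun Z z₁ z₂ hz =>
    ⟨Glue.desc h₁ h₂ z₁ z₂ hz, ⟨rfl, rfl⟩, ?_⟩⟩
  rintro m ⟨hm₁, hm₂⟩
  exact Glue.hom_ext h₁ h₂ (DFunLike.congr_fun (F := G₁.G →g Z.G) hm₁)
    (DFunLike.congr_fun (F := G₂.G →g Z.G) hm₂)
end

section
/- Let ℕ_div be the poset of positive natural numbers ordered by divisibility, viewed as a category; let Ω_0 = 1, Ω_1 = 2, and Ω_n = ∏_{p prime, p ≤ n} p^n for n ≥ 2; and let the proxy pushout of a span a ← Ω_n → b (where Ω_n divides both a and b) be lcm(a, b) with its two divisibility morphisms. Then (ℕ_div, Ω, lcm) is a spined category, and the map sending each positive integer m to the largest exponent occurring in its prime factorization (with 1 ↦ 0) is an S-functor over it. In particular (ℕ_div, Ω, lcm) is measurable. -/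
open CategoryTheory

universe u v

/-- The data of a spine and proxy pushout operation on a category. -/
structure SpineData (C : Type u) [Category.{v} C] where
  /-- the spine, a functor from the discrete category ℕ -/
  Ω : ℕ → C
  /-- proxy pushout object of a span out of a spine object -/
  P : ∀ {n : ℕ} {G H : C}, (Ω n ⟶ G) → (Ω n ⟶ H) → C
  /-- left structure morphism of the proxy pushout cocone -/
  inl : ∀ {n : ℕ} {G H : C} (g : Ω n ⟶ G) (h : Ω n ⟶ H), G ⟶ P g h
  /-- right structure morphism of the proxy pushout cocone -/
  inr : ∀ {n : ℕ} {G H : C} (g : Ω n ⟶ G) (h : Ω n ⟶ H), H ⟶ P g h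

variable {C : Type u} [Category.{v} C]

/-- (SC1): every object admits a morphism to some spine object. -/
def SpineData.SC1 (D : SpineData C) : Prop :=
  ∀ X : C, ∃ n : ℕ, Nonempty (X ⟶ D.Ω n)

/-- (SC2): unique compatibility morphisms between proxy pushouts of extended spans. -/
def SpineData.SC2 (D : SpineData C) : Prop :=
  ∀ {n : ℕ} {G H G' H' : C} (g : D.Ω n ⟶ G) (h : D.Ω n ⟶ H) (g' : G ⟶ G') (h' : H ⟶ H'),
    ∃! m : D.P g h ⟶ D.P (g ≫ g') (h ≫ h'),
      D.inl g h ≫ m = g' ≫ D.inl (g ≫ g') (h ≫ h') ∧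
      D.inr g h ≫ m = h' ≫ D.inr (g ≫ g') (h ≫ h')

/-- A spined category is a category equipped with spine data satisfying SC1 and SC2. -/
def SpineData.IsSpined (D : SpineData C) : Prop := D.SC1 ∧ D.SC2

/-- An S-functor over a spined category `(C, Ω, 𝔓)`: a spinal functor to the spined
category `Nat` (the poset `(ℕ, ≤)` with spine `n ↦ n` and proxy pushouts given by maxima).
Equivalently: a monotone map preserving the spine and proxy pushouts. -/
structure SFunctor (D : SpineData C) where
  val : C → ℕ
  mono : ∀ {X Y : C}, (X ⟶ Y) → val X ≤ val Y
  spine : ∀ n : ℕ, val (D.Ω n) = n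
  pp : ∀ {n : ℕ} {G H : C} (g : D.Ω n ⟶ G) (h : D.Ω n ⟶ H),
    val (D.P g h) = max (val G) (val H)

/-- An object is pseudo-chordal if all S-functors agree on it. -/
def PseudoChordal (D : SpineData C) (X : C) : Prop :=
  ∀ F G : SFunctor D, F.val X = G.val X

/-- The chordal objects: the smallest collection of objects containing the spine and
closed under proxy pushouts. -/
inductive Chordal (D : SpineData C) : C → Prop
  | spine (n : ℕ) : Chordal D (D.Ω n)
  | push {n : ℕ} {A B : C} (a : D.Ω n ⟶ A) (b : D.Ω n ⟶ B) :
      Chordal D A → Chordal D B → Chordal D (D.P a b)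

/-- The set of widths of pseudo-chordal completions of `X`: `k` is such a width
iff there is a morphism `X ⟶ H` with `H` pseudo-chordal and every S-functor takes
the value `k` on `H`. -/
def pcWidths (D : SpineData C) (X : C) : Set ℕ :=
  {k | ∃ H : C, Nonempty (X ⟶ H) ∧ PseudoChordal D H ∧ ∀ F : SFunctor D, F.val H = k}

/-- The set of widths of chordal completions of `X`. -/
def chWidths (D : SpineData C) (X : C) : Set ℕ :=
  {k | ∃ H : C, Nonempty (X ⟶ H) ∧ Chordal D H ∧ ∀ F : SFunctor D, F.val H = k}

/-- The triangulation number: minimum width of a pseudo-chordal completion. -/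
noncomputable def tri (D : SpineData C) (X : C) : ℕ := sInf (pcWidths D X)

/-- The chordal triangulation number: minimum width of a chordal completion. -/
noncomputable def triCh (D : SpineData C) (X : C) : ℕ := sInf (chWidths D X)

/-- The order of an object: least `n` admitting a morphism `X ⟶ Ω n`. -/
noncomputable def ordOf (D : SpineData C) (X : C) : ℕ := sInf {n : ℕ | Nonempty (X ⟶ D.Ω n)}

/-- The positive natural numbers. -/
def PNatDiv : Type := {n : ℕ // 0 < n}

/-- The divisibility partial order on the positive natural numbers; `ℕ_div` is this
poset viewed as a category. -/
instance : PartialOrder PNatDiv where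
  le a b := a.1 ∣ b.1
  le_refl a := dvd_refl a.1
  le_trans a b c hab hbc := dvd_trans hab hbc
  le_antisymm a b hab hba := Subtype.ext (Nat.dvd_antisymm hab hba)

/-- The underlying natural number of the spine: `Ω 0 = 1`, `Ω 1 = 2`, and
`Ω n = ∏_{p prime, p ≤ n} p ^ n` for `n ≥ 2`. -/
def omegaDivNat : ℕ → ℕ
  | 0 => 1
  | 1 => 2
  | (n + 2) => ∏ p ∈ (Finset.range (n + 3)).filter Nat.Prime, p ^ (n + 2)

lemma omegaDivNat_pos : ∀ n : ℕ, 0 < omegaDivNat n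
  | 0 => one_pos
  | 1 => two_pos
  | (n + 2) => Finset.prod_pos fun p hp =>
      pow_pos ((Finset.mem_filter.1 hp).2.pos) _

/-- The spine data of `ℕ_div`: spine `omegaDivNat` and proxy pushouts given by least
common multiples. -/
def DivSpine : SpineData PNatDiv where
  Ω n := ⟨omegaDivNat n, omegaDivNat_pos n⟩
  P {_ a b} _ _ := ⟨Nat.lcm a.1 b.1, Nat.lcm_pos a.2 b.2⟩
  inl {_ a b} _ _ := homOfLE (show a.1 ∣ Nat.lcm a.1 b.1 from Nat.dvd_lcm_left _ _)
  inr {_ a b} _ _ := homOfLE (show b.1 ∣ Nat.lcm a.1 b.1 from Nat.dvd_lcm_right _ _)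

/-- The largest exponent occurring in the prime factorization of `m` (`0` for `m = 1`). -/
def maxExp (m : ℕ) : ℕ := m.factorization.support.sup m.factorization

/-! In a poset category all hom-sets are subsingletons, so (SC1) and (SC2) only ask for
inequalities; for `ℕ_div`, (SC2) is monotonicity of `lcm`. Since `Ω n = (max n 2)# ^ n`,
every `m ≠ 0` divides `Ω (m + 2)`, its exponents being smaller than `m`. The exponents of `lcm a b`
are the pointwise maxima of those of `a` and `b`, so `maxExp` turns `lcm` into `max`; and
`maxExp (n# ^ k) = k` for `n ≥ 2` because `n#` is squarefree and divisible by `2`. -/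

namespace SpineData

variable {α : Type u} [Preorder α] (D : SpineData α)

theorem sc1_of_forall_le (h : ∀ X, ∃ n, X ≤ D.Ω n) : D.SC1 :=
  fun X => (h X).imp fun _ hn => ⟨homOfLE hn⟩

theorem sc2_of_forall_le
    (hle : ∀ {n : ℕ} {G H G' H' : α} (g : D.Ω n ⟶ G) (h : D.Ω n ⟶ H) (g' : G ⟶ G')
      (h' : H ⟶ H'), D.P g h ≤ D.P (g ≫ g') (h ≫ h')) : D.SC2 :=
  fun g h g' h' => ⟨homOfLE (hle g h g' h'), ⟨Subsingleton.elim _ _, Subsingleton.elim _ _⟩,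
    fun _ _ => Subsingleton.elim _ _⟩

end SpineData

open Nat

theorem maxExp_le_iff {m k : ℕ} : maxExp m ≤ k ↔ ∀ p, m.factorization p ≤ k := by
  refine Finset.sup_le_iff.trans ⟨fun h p => ?_, fun h p _ => h p⟩
  by_cases hp : p ∈ m.factorization.support
  · exact h p hp
  · simp [Finsupp.notMem_support_iff.1 hp]

theorem factorization_le_maxExp (m p : ℕ) : m.factorization p ≤ maxExp m :=
  maxExp_le_iff.1 le_rfl p

theorem maxExp_mono {a b : ℕ} (hb : b ≠ 0) (h : a ∣ b) : maxExp a ≤ maxExp b :=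
  maxExp_le_iff.2 fun p =>
    ((factorization_le_iff_dvd (ne_zero_of_dvd_ne_zero hb h) hb).2 h p).trans
      (factorization_le_maxExp b p)

theorem maxExp_lcm {a b : ℕ} (ha : a ≠ 0) (hb : b ≠ 0) :
    maxExp (a.lcm b) = max (maxExp a) (maxExp b) :=
  eq_of_forall_ge_iff fun k => by
    simp only [maxExp_le_iff, factorization_lcm ha hb, Finsupp.sup_apply, sup_le_iff,
      forall_and]

theorem maxExp_primorial_pow {n : ℕ} (hn : 2 ≤ n) (k : ℕ) : maxExp (primorial n ^ k) = k := by
  have hsq := (squarefree_primorial n).natFactorization_le_one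
  have htwo : (primorial n).factorization 2 = 1 :=
    le_antisymm (hsq 2) (prime_two.factorization_pos_of_dvd (primorial_ne_zero n)
      (prime_two.dvd_primorial_iff.2 hn))
  refine le_antisymm (maxExp_le_iff.2 fun p => ?_) ?_
  · simpa [Nat.factorization_pow] using mul_le_of_le_one_right (zero_le k) (hsq p)
  · simpa [Nat.factorization_pow, htwo] using factorization_le_maxExp (primorial n ^ k) 2

theorem omegaDivNat_eq_primorial_pow : ∀ n, omegaDivNat n = primorial (max n 2) ^ n
  | 0 => rfl
  | 1 => by simp [omegaDivNat]
  | n + 2 => by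
    rw [max_eq_left (by omega), primorial, ← Finset.prod_pow]
    rfl

theorem maxExp_omegaDivNat (n : ℕ) : maxExp (omegaDivNat n) = n := by
  rw [omegaDivNat_eq_primorial_pow, maxExp_primorial_pow (le_max_right n 2)]

theorem dvd_omegaDivNat_add_two {m : ℕ} (hm : m ≠ 0) : m ∣ omegaDivNat (m + 2) := by
  rw [omegaDivNat_eq_primorial_pow, max_eq_left (by omega)]
  refine ((dvd_pow_self_iff hm (primorial_ne_zero _)).2 fun p hp => ?_).trans
    (pow_dvd_pow _ (by omega))
  rw [primeFactors_primorial, mem_primesLE]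
  exact ⟨(le_of_mem_primeFactors hp).trans (by omega), prime_of_mem_primeFactors hp⟩

theorem divSpine_isSpined : DivSpine.IsSpined :=
  ⟨SpineData.sc1_of_forall_le _ fun X => ⟨X.1 + 2, dvd_omegaDivNat_add_two X.2.ne'⟩,
    SpineData.sc2_of_forall_le _ fun _ _ g' h' => lcm_dvd_lcm (leOfHom g') (leOfHom h')⟩

def maxExpSFunctor : SFunctor DivSpine where
  val x := maxExp x.1
  mono {_ Y} f := maxExp_mono Y.2.ne' (leOfHom f)
  spine := maxExp_omegaDivNat
  pp {_ G H} _ _ := maxExp_lcm G.2.ne' H.2.ne'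

/-- `(ℕ_div, Ω, lcm)` is a spined category, and the map sending each
positive integer to the largest exponent occurring in its prime factorization is an
S-functor over it; in particular `(ℕ_div, Ω, lcm)` is measurable. -/
theorem divSpine_isSpined_and_maxExp_SFunctor :
    DivSpine.IsSpined ∧ ∃ F : SFunctor DivSpine, ∀ x : PNatDiv, F.val x = maxExp x.1 :=
  ⟨divSpine_isSpined, maxExpSFunctor, fun _ => rfl⟩
end

section
/- In the spined category (ℕ_div, Ω, lcm) of positive natural numbers under divisibility with spine Ω_0 = 1, Ω_1 = 2, Ω_n = ∏_{p prime, p ≤ n} p^n for n ≥ 2 and proxy pushouts given by lcm, the generalized clique number ω (where ω(x) is the largest n such that Ω_n divides x) is not an S-functor. Concretely, ω fails to preserve proxy pushouts: Ω_0 = 1 divides both 16 and 81, yet ω(lcm(16, 81)) = ω(1296) = 4 while max(ω(16), ω(81)) = 2. -/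
open CategoryTheory

universe u v

variable {C : Type u} [Category.{v} C]

/-- The generalized clique number on `ℕ_div`: the largest `n` such that there is a
morphism `Ω n ⟶ x`, i.e. such that `Ω n` divides `x`. -/
noncomputable def gcn (x : PNatDiv) : ℕ := sSup {n : ℕ | omegaDivNat n ∣ x.1}

/-! Every prime `p ≤ n` divides `Ω n` to the power `n`, so a power `p ^ (k + 1)` with `p ≤ k + 1`
that does not divide `x` bounds `ω x` by `k`. With `p = 2` this gives `ω 1296 = 4` and `ω 81 = 0`,
with `p = 3` it gives `ω 16 = 2`; hence `ω (lcm 16 81) = 4 ≠ 2 = max (ω 16) (ω 81)`, while an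
S-functor must send the proxy pushout `lcm 16 81` to that maximum. -/

theorem not_exists_SFunctor_val_eq_of_ne_max {D : SpineData C} (f : C → ℕ) {n : ℕ} {G H : C}
    (g : D.Ω n ⟶ G) (h : D.Ω n ⟶ H) (hne : f (D.P g h) ≠ max (f G) (f H)) :
    ¬ ∃ F : SFunctor D, ∀ X, F.val X = f X := by
  rintro ⟨F, hF⟩
  apply hne
  simpa only [hF] using F.pp g h

lemma prime_pow_dvd_omegaDivNat {p n : ℕ} (hp : p.Prime) (hpn : p ≤ n) :
    p ^ n ∣ omegaDivNat n := by
  obtain ⟨m, rfl⟩ : ∃ m, n = m + 2 := ⟨n - 2, by have := hp.two_le; omega⟩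
  exact Finset.dvd_prod_of_mem _ (Finset.mem_filter.2 ⟨Finset.mem_range.2 (by omega), hp⟩)

lemma le_of_omegaDivNat_dvd {p k n x : ℕ} (hp : p.Prime) (hpk : p ≤ k + 1)
    (hx : ¬ p ^ (k + 1) ∣ x) (hn : omegaDivNat n ∣ x) : n ≤ k := by
  by_contra! hkn
  exact hx ((pow_dvd_pow p hkn).trans ((prime_pow_dvd_omegaDivNat hp (by omega)).trans hn))

lemma gcn_eq_of_isGreatest {x : PNatDiv} {k : ℕ}
    (h : IsGreatest {n | omegaDivNat n ∣ x.1} k) : gcn x = k :=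
  h.csSup_eq

lemma gcn_1296 : gcn ⟨1296, by norm_num⟩ = 4 :=
  gcn_eq_of_isGreatest
    ⟨by decide, fun _ ↦ le_of_omegaDivNat_dvd Nat.prime_two (by norm_num) (by decide)⟩

lemma gcn_16 : gcn ⟨16, by norm_num⟩ = 2 :=
  gcn_eq_of_isGreatest ⟨by decide, fun _ ↦ le_of_omegaDivNat_dvd Nat.prime_three le_rfl (by decide)⟩

lemma gcn_81 : gcn ⟨81, by norm_num⟩ = 0 := by
  refine gcn_eq_of_isGreatest ⟨by decide, fun n hn ↦ ?_⟩
  have hn_le : n ≤ 1 := le_of_omegaDivNat_dvd Nat.prime_two le_rfl (by decide) hn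
  interval_cases n
  · exact le_rfl
  · exact absurd hn (by decide)

/-- in `(ℕ_div, Ω, lcm)` the generalized clique number `ω` is not an
S-functor: `Ω 0 = 1` divides both `16` and `81`, yet
`ω (lcm 16 81) = ω 1296 = 4` while `max (ω 16) (ω 81) = 2`; in particular `ω` fails to
preserve the proxy pushout of the span `16 ← Ω 0 → 81`, so no S-functor has `ω` as its
underlying map. -/
theorem gcn_not_SFunctor :
    omegaDivNat 0 = 1 ∧ Nat.lcm 16 81 = 1296 ∧
    gcn ⟨1296, by norm_num⟩ = 4 ∧
    max (gcn ⟨16, by norm_num⟩) (gcn ⟨81, by norm_num⟩) = 2 ∧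
    gcn (DivSpine.P
        (homOfLE (show omegaDivNat 0 ∣ 16 by decide) :
          DivSpine.Ω 0 ⟶ (⟨16, by norm_num⟩ : PNatDiv))
        (homOfLE (show omegaDivNat 0 ∣ 81 by decide) :
          DivSpine.Ω 0 ⟶ (⟨81, by norm_num⟩ : PNatDiv))) ≠
      max (gcn ⟨16, by norm_num⟩) (gcn ⟨81, by norm_num⟩) ∧
    ¬ ∃ F : SFunctor DivSpine, ∀ x : PNatDiv, F.val x = gcn x := by
  have hmax : max (gcn ⟨16, by norm_num⟩) (gcn ⟨81, by norm_num⟩) = 2 := by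
    rw [gcn_16, gcn_81]; rfl
  refine ⟨rfl, rfl, gcn_1296, hmax, ?ne, not_exists_SFunctor_val_eq_of_ne_max gcn _ _ ?ne⟩
  change gcn ⟨1296, by norm_num⟩ ≠ _
  rw [gcn_1296, hmax]
  decide
end

section
/- Let (C, Ω, 𝔓) be a spined category. Then every spine object Ω_n is pseudo-chordal, and the pseudo-chordal objects are closed under proxy pushouts: for all pseudo-chordal objects A, B and all arrows f : Ω_n → A and g : Ω_n → B, the proxy pushout object 𝔓(f, g) is pseudo-chordal. -/
open CategoryTheory

universe u v

variable {C : Type u} [Category.{v} C]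

theorem pseudoChordal_spine (D : SpineData C) (n : ℕ) : PseudoChordal D (D.Ω n) :=
  fun F G => by rw [F.spine, G.spine]

theorem PseudoChordal.proxyPushout {D : SpineData C} {n : ℕ} {A B : C}
    (hA : PseudoChordal D A) (hB : PseudoChordal D B) (f : D.Ω n ⟶ A) (g : D.Ω n ⟶ B) :
    PseudoChordal D (D.P f g) :=
  fun F G => by rw [F.pp, G.pp, hA F G, hB F G]

theorem pseudoChordal_spine_and_closed_under_proxy_pushouts_general
    {C : Type u} [Category.{v} C] (D : SpineData C) :
    (∀ n : ℕ, PseudoChordal D (D.Ω n)) ∧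
    (∀ {n : ℕ} {A B : C}, PseudoChordal D A → PseudoChordal D B →
      ∀ (f : D.Ω n ⟶ A) (g : D.Ω n ⟶ B), PseudoChordal D (D.P f g)) :=
  ⟨pseudoChordal_spine D, fun hA hB => hA.proxyPushout hB⟩

/-- in a spined category, every spine object is pseudo-chordal and the
pseudo-chordal objects are closed under proxy pushouts. -/
theorem pseudoChordal_spine_and_closed_under_proxy_pushouts
    {C : Type u} [Category.{v} C] (D : SpineData C) (hD : D.IsSpined) :
    (∀ n : ℕ, PseudoChordal D (D.Ω n)) ∧
    (∀ {n : ℕ} {A B : C}, PseudoChordal D A → PseudoChordal D B →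
      ∀ (f : D.Ω n ⟶ A) (g : D.Ω n ⟶ B), PseudoChordal D (D.P f g)) :=
  pseudoChordal_spine_and_closed_under_proxy_pushouts_general D
end

section
/- Let (C, Ω, 𝔓) be a measurable spined category. Then the triangulation number Δ and the chordal triangulation number Δ^ch are well-defined on all objects and define functors C → (ℕ, ≤): for every morphism f : X → Y in C, Δ[X] ≤ Δ[Y] and Δ^ch[X] ≤ Δ^ch[Y]. -/
/-!
Both numbers are infima of sets of widths. Precomposing with `f : X ⟶ Y` turns every completion
of `Y` into a completion of `X` of the same width, so the width sets shrink along morphisms and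
their infima grow. The sets are nonempty because (SC1) maps every object into some spine object
`Ω n`, which is chordal of width `n`, and chordal objects are pseudo-chordal since S-functors
agree on the spine and are determined on proxy pushouts by their values on the legs.
-/

open CategoryTheory

universe u v

variable {C : Type u} [Category.{v} C]

section Widths

variable {D : SpineData C}

theorem Chordal.pseudoChordal {H : C} (h : Chordal D H) : PseudoChordal D H := by
  intro F G
  induction h with
  | spine n => rw [F.spine, G.spine]
  | push a b _ _ ihA ihB => rw [F.pp, G.pp, ihA, ihB]

theorem chWidths_subset_pcWidths (X : C) : chWidths D X ⊆ pcWidths D X :=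
  fun _ ⟨H, hXH, hH, hval⟩ => ⟨H, hXH, hH.pseudoChordal, hval⟩

theorem chWidths_anti {X Y : C} (f : X ⟶ Y) : chWidths D Y ⊆ chWidths D X :=
  fun _ ⟨H, ⟨g⟩, hH, hval⟩ => ⟨H, ⟨f ≫ g⟩, hH, hval⟩

theorem pcWidths_anti {X Y : C} (f : X ⟶ Y) : pcWidths D Y ⊆ pcWidths D X :=
  fun _ ⟨H, ⟨g⟩, hH, hval⟩ => ⟨H, ⟨f ≫ g⟩, hH, hval⟩

theorem chWidths_nonempty (hD : D.SC1) (X : C) : (chWidths D X).Nonempty :=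
  let ⟨n, hXn⟩ := hD X
  ⟨n, D.Ω n, hXn, Chordal.spine n, fun F => F.spine n⟩

theorem pcWidths_nonempty (hD : D.SC1) (X : C) : (pcWidths D X).Nonempty :=
  (chWidths_nonempty hD X).mono (chWidths_subset_pcWidths X)

theorem tri_le_of_hom (hD : D.SC1) {X Y : C} (f : X ⟶ Y) : tri D X ≤ tri D Y :=
  csInf_le_csInf (OrderBot.bddBelow _) (pcWidths_nonempty hD Y) (pcWidths_anti f)

theorem triCh_le_of_hom (hD : D.SC1) {X Y : C} (f : X ⟶ Y) : triCh D X ≤ triCh D Y :=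
  csInf_le_csInf (OrderBot.bddBelow _) (chWidths_nonempty hD Y) (chWidths_anti f)

end Widths

theorem triangulation_functorial_general
    {C : Type u} [Category.{v} C] (D : SpineData C) (hD : D.IsSpined) :
    (∀ X : C, (pcWidths D X).Nonempty ∧ (chWidths D X).Nonempty) ∧
    (∀ {X Y : C}, (X ⟶ Y) → tri D X ≤ tri D Y ∧ triCh D X ≤ triCh D Y) :=
  ⟨fun X => ⟨pcWidths_nonempty hD.1 X, chWidths_nonempty hD.1 X⟩,
    fun f => ⟨tri_le_of_hom hD.1 f, triCh_le_of_hom hD.1 f⟩⟩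

/-- in a measurable spined category, the triangulation number Δ and the
chordal triangulation number Δ^ch are well-defined on all objects (every object has a
pseudo-chordal and a chordal completion of a well-defined width) and are functorial
into `(ℕ, ≤)`: morphisms `X ⟶ Y` give `Δ[X] ≤ Δ[Y]` and `Δ^ch[X] ≤ Δ^ch[Y]`. -/
theorem triangulation_functorial
    {C : Type u} [Category.{v} C] (D : SpineData C) (hD : D.IsSpined)
    (hmeas : Nonempty (SFunctor D)) :
    (∀ X : C, (pcWidths D X).Nonempty ∧ (chWidths D X).Nonempty) ∧
    (∀ {X Y : C}, (X ⟶ Y) → tri D X ≤ tri D Y ∧ triCh D X ≤ triCh D Y) :=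
  triangulation_functorial_general D hD
end

section
/- Let (C, Ω, 𝔓) be a spined category, S a set, and f : S → Ob(C) a function such that (i) for every n ∈ ℕ there exists X ∈ S with f(X) = Ω_n, and (ii) for every span f(X) ←x— Ω_n —y→ f(Y) in C with X, Y ∈ S there is a distinguished element Z_{x,y} ∈ S with f(Z_{x,y}) = 𝔓(x, y). Let S_↓f be the category with object set S and hom-sets Hom_{S_↓f}(A, B) := Hom_C(f(A), f(B)) (with composition inherited from C). Then there exist a spine Ω^S (choosing for each n some element of f⁻¹(Ω_n)) and a proxy pushout operation 𝔓^S (assigning to each span X ←x— Ω^S_n —y→ Y the object Z_{x,y} with the structure maps of 𝔓(x,y)) such that: (S_↓f, Ω^S, 𝔓^S) is a spined category; f, viewed as the evident functor S_↓f → C, is a spinal functor; and if (C, Ω, 𝔓) is measurable then so is (S_↓f, Ω^S, 𝔓^S). -/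
/-!
The spine and the proxy pushouts of `S_↓f` are chosen preimages under `f` of those of `C`, and the
structure maps are those of `C` followed by the identifications `f (𝔓^S (x, y)) = 𝔓 (x, y)`.
Since `S_↓f ⥤ C` is fully faithful, (SC1), (SC2) and S-functors all transport along it: the
comparison morphisms of (SC2) in `S_↓f` are the ones of `C` conjugated by these identifications.
-/

open CategoryTheory

universe u v

variable {C : Type u} [Category.{v} C]

universe w

/-- The `S`-category `S_↓f` induced by a function `f : S → C`: objects are the elements
of `S`, and `Hom(A, B) := Hom_C (f A, f B)`. -/
def Ind {C : Type u} [Category.{v} C] {S : Type w} (f : S → C) : Type w := S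

instance {C : Type u} [Category.{v} C] {S : Type w} (f : S → C) : Category.{v} (Ind f) where
  Hom A B := f A ⟶ f B
  id A := 𝟙 (f A)
  comp g h := g ≫ h

/-- The evident (faithful, injective-on-objects) functor `S_↓f → C`. -/
def indFunctor {C : Type u} [Category.{v} C] {S : Type w} (f : S → C) : Ind f ⥤ C where
  obj A := f A
  map φ := φ

lemma existsUnique_comp_iso_of_existsUnique {G H G' H' P P' Q Q' : C} (i : P ≅ P') (j : Q ≅ Q')
    (a : G ⟶ P) (b : H ⟶ P) (c : G' ⟶ Q) (d : H' ⟶ Q) (g' : G ⟶ G') (h' : H ⟶ H')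
    (h : ∃! m : P ⟶ Q, a ≫ m = g' ≫ c ∧ b ≫ m = h' ≫ d) :
    ∃! m : P' ⟶ Q', (a ≫ i.hom) ≫ m = g' ≫ c ≫ j.hom ∧ (b ≫ i.hom) ≫ m = h' ≫ d ≫ j.hom := by
  obtain ⟨m, ⟨hma, hmb⟩, hm⟩ := h
  refine ⟨i.inv ≫ m ≫ j.hom, ⟨by simp [reassoc_of% hma], by simp [reassoc_of% hmb]⟩, ?_⟩
  rintro m' ⟨hm'a, hm'b⟩
  have hconj : i.hom ≫ m' ≫ j.inv = m :=
    hm _ ⟨by simp [reassoc_of% hm'a], by simp [reassoc_of% hm'b]⟩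
  simp [← hconj]

lemma SpineData.SC2.existsUnique_of_comp_eq {D : SpineData C}
    (hD : D.SC2) {n : ℕ} {G H G' H' : C} (g : D.Ω n ⟶ G) (h : D.Ω n ⟶ H) (g' : G ⟶ G')
    (h' : H ⟶ H') {a : D.Ω n ⟶ G'} {b : D.Ω n ⟶ H'} (ha : g ≫ g' = a) (hb : h ≫ h' = b) :
    ∃! m : D.P g h ⟶ D.P a b,
      D.inl g h ≫ m = g' ≫ D.inl a b ∧ D.inr g h ≫ m = h' ≫ D.inr a b := by
  subst ha hb
  exact hD g h g' h'

namespace SpineData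

variable (D : SpineData C) {S : Type w} {f : S → C}
  (Ωs : ℕ → S) (eΩ : ∀ n, f (Ωs n) = D.Ω n)
  (Ps : ∀ (n : ℕ) (X Y : S), (D.Ω n ⟶ f X) → (D.Ω n ⟶ f Y) → S)
  (eP : ∀ n X Y (x : D.Ω n ⟶ f X) (y : D.Ω n ⟶ f Y), f (Ps n X Y x y) = D.P x y)

def induce : SpineData (Ind f) where
  Ω := Ωs
  P {n X Y} x y := Ps n X Y (eqToHom (eΩ n).symm ≫ x) (eqToHom (eΩ n).symm ≫ y)
  inl {n X Y} _ _ := (D.inl _ _ ≫ eqToHom (eP n X Y _ _).symm : f X ⟶ f (Ps n X Y _ _))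
  inr {n X Y} _ _ := (D.inr _ _ ≫ eqToHom (eP n X Y _ _).symm : f Y ⟶ f (Ps n X Y _ _))

variable {D}

lemma induce_SC1 (hD : D.SC1) : (D.induce Ωs eΩ Ps eP).SC1 := fun X ↦ by
  obtain ⟨n, ⟨φ⟩⟩ := hD (f X)
  exact ⟨n, ⟨(φ ≫ eqToHom (eΩ n).symm : f X ⟶ f (Ωs n))⟩⟩

lemma induce_SC2 (hD : D.SC2) : (D.induce Ωs eΩ Ps eP).SC2 := by
  intro n G H G' H' g h g' h'
  exact existsUnique_comp_iso_of_existsUnique (eqToIso (eP ..).symm) (eqToIso (eP ..).symm)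
    _ _ _ _ g' h' (hD.existsUnique_of_comp_eq _ _ g' h' (Category.assoc ..) (Category.assoc ..))

def _root_.SFunctor.induce (F : SFunctor D) : SFunctor (D.induce Ωs eΩ Ps eP) where
  val X := F.val (f X)
  mono φ := F.mono φ
  spine n := (congrArg F.val (eΩ n)).trans (F.spine n)
  pp {n G H} _ _ := (congrArg F.val (eP n G H _ _)).trans (F.pp _ _)

end SpineData

/-- if `f : S → C` is surjective on the spine of a spined category
`(C, Ω, 𝔓)` and the proxy pushout object of every span between objects in the image of
`f` has a distinguished preimage under `f`, then `S_↓f` carries spine data `(Ω^S, 𝔓^S)`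
(with `f (Ω^S n) = Ω n` and `𝔓^S` the distinguished preimages of the proxy pushouts,
with the corresponding structure maps) making it a spined category, such that the
evident functor `S_↓f → C` is a spinal functor; moreover if `(C, Ω, 𝔓)` is measurable
then so is `(S_↓f, Ω^S, 𝔓^S)`. -/
theorem induced_spined_category {C : Type u} [Category.{v} C] (D : SpineData C)
    (hD : D.IsSpined) {S : Type w} (f : S → C)
    (hsurj : ∀ n : ℕ, ∃ X : S, f X = D.Ω n)
    (hpre : ∀ (n : ℕ) (X Y : S) (x : D.Ω n ⟶ f X) (y : D.Ω n ⟶ f Y),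
      ∃ Z : S, f Z = D.P x y) :
    ∃ (Ds : SpineData (Ind f)) (e : ∀ n : ℕ, f (Ds.Ω n) = D.Ω n),
      Ds.IsSpined ∧
      (∀ (n : ℕ) (X Y : Ind f) (x : Ds.Ω n ⟶ X) (y : Ds.Ω n ⟶ Y),
        ∃ ep : f (Ds.P x y) =
            D.P (eqToHom (e n).symm ≫ (indFunctor f).map x)
                (eqToHom (e n).symm ≫ (indFunctor f).map y),
          (indFunctor f).map (Ds.inl x y) ≫ eqToHom ep =
            D.inl (eqToHom (e n).symm ≫ (indFunctor f).map x)
                  (eqToHom (e n).symm ≫ (indFunctor f).map y) ∧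
          (indFunctor f).map (Ds.inr x y) ≫ eqToHom ep =
            D.inr (eqToHom (e n).symm ≫ (indFunctor f).map x)
                  (eqToHom (e n).symm ≫ (indFunctor f).map y)) ∧
      (Nonempty (SFunctor D) → Nonempty (SFunctor Ds)) := by
  choose Ωs eΩ using hsurj
  choose Ps eP using hpre
  refine ⟨D.induce Ωs eΩ Ps eP, eΩ,
    ⟨SpineData.induce_SC1 Ωs eΩ Ps eP hD.1, SpineData.induce_SC2 Ωs eΩ Ps eP hD.2⟩,
    fun n X Y _ _ ↦ ⟨eP n X Y _ _, (comp_eqToHom_iff _ _ _).2 rfl, (comp_eqToHom_iff _ _ _).2 rfl⟩,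
    fun ⟨F⟩ ↦ ⟨F.induce Ωs eΩ Ps eP⟩⟩
end
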